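/- If R is a ring possessing a non-injective simple indigent right R-module U such that Hom(E, U) = 0 for every injective right R-module E, then R is right hereditary and right Noetherian. -/

import Mathlib

universe u

open LinearMap MulOpposite

/-! Character module -/

/-- The character group `M⁺ = Hom_ℤ(M, ℚ/ℤ)`. -/
abbrev CharMod (M : Type u) [AddCommGroup M] : Type u := M →+ AddCircle (1 : ℚ)

/-- If `M` is a left `S`-module, then `M⁺` is a right `S`-module via `(f • r) m = f (r • m)`. -/
instance CharMod.moduleRight (S : Type u) [Ring S] (M : Type u) [AddCommGroup M]
    [Module S M] : Module Sᵐᵒᵖ (CharMod M) where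
  smul r f := f.comp (DistribMulAction.toAddMonoidHom M (unop r))
  one_smul f := by
    apply AddMonoidHom.ext; intro m
    show f ((unop (1 : Sᵐᵒᵖ)) • m) = f m
    simp
  mul_smul r s f := by
    apply AddMonoidHom.ext; intro m
    show f ((unop (r * s)) • m) = f ((unop s) • ((unop r) • m))
    simp [mul_smul]
  smul_zero r := by apply AddMonoidHom.ext; intro m; rfl
  smul_add r f g := by apply AddMonoidHom.ext; intro m; rfl
  add_smul r s f := by
    apply AddMonoidHom.ext; intro m
    show f ((unop (r + s)) • m) = f ((unop r) • m) + f ((unop s) • m)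
    rw [unop_add, add_smul, map_add]
  zero_smul f := by
    apply AddMonoidHom.ext; intro m
    show f ((unop (0 : Sᵐᵒᵖ)) • m) = 0
    simp

/-- If `M` is a right `S`-module, then `M⁺` is a left `S`-module via `(r • f) m = f (m • r)`. -/
instance CharMod.moduleLeft (S : Type u) [Ring S] (M : Type u) [AddCommGroup M]
    [Module Sᵐᵒᵖ M] : Module S (CharMod M) where
  smul r f := f.comp (DistribMulAction.toAddMonoidHom M (op r))
  one_smul f := by
    apply AddMonoidHom.ext; intro m
    show f ((op (1 : S)) • m) = f m
    simp
  mul_smul r s f := by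
    apply AddMonoidHom.ext; intro m
    show f ((op (r * s)) • m) = f ((op s) • ((op r) • m))
    rw [← mul_smul, ← op_mul]
  smul_zero r := by apply AddMonoidHom.ext; intro m; rfl
  smul_add r f g := by apply AddMonoidHom.ext; intro m; rfl
  add_smul r s f := by
    apply AddMonoidHom.ext; intro m
    show f ((op (r + s)) • m) = f ((op r) • m) + f ((op s) • m)
    rw [op_add, add_smul, map_add]
  zero_smul f := by
    apply AddMonoidHom.ext; intro m
    show f ((op (0 : S)) • m) = 0
    simp

/-! Tensor product of a right module and a left module over a (possibly noncommutative) ring -/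

section Tensor

variable (S : Type u) [Ring S]

/-- The bilinearity relations defining `M ⊗_S N` as a quotient of `M ⊗_ℤ N`. -/
def tensorRel (M N : Type u) [AddCommGroup M] [Module Sᵐᵒᵖ M] [AddCommGroup N] [Module S N] :
    Submodule ℤ (TensorProduct ℤ M N) :=
  Submodule.span ℤ {x | ∃ (m : M) (r : S) (n : N),
    x = (op r • m) ⊗ₜ[ℤ] n - m ⊗ₜ[ℤ] (r • n)}

/-- `M ⊗_S N` for a right `S`-module `M` and a left `S`-module `N`. -/
def RTensor (M N : Type u) [AddCommGroup M] [Module Sᵐᵒᵖ M] [AddCommGroup N] [Module S N] :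
    Type u := TensorProduct ℤ M N ⧸ tensorRel S M N

noncomputable instance (M N : Type u) [AddCommGroup M] [Module Sᵐᵒᵖ M] [AddCommGroup N] [Module S N] :
    AddCommGroup (RTensor S M N) :=
  inferInstanceAs (AddCommGroup (TensorProduct ℤ M N ⧸ tensorRel S M N))

/-- Functoriality of `M ⊗_S -` in the left-module variable. -/
noncomputable def rTensorMap (M : Type u) [AddCommGroup M] [Module Sᵐᵒᵖ M] {N B : Type u}
    [AddCommGroup N] [Module S N] [AddCommGroup B] [Module S B] (g : N →ₗ[S] B) :
    RTensor S M N →ₗ[ℤ] RTensor S M B :=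
  Submodule.mapQ _ _ (TensorProduct.map LinearMap.id g.toAddMonoidHom.toIntLinearMap)
    (by
      rw [tensorRel, Submodule.span_le]
      rintro x ⟨m, r, n, rfl⟩
      refine Submodule.subset_span ⟨m, r, g n, ?_⟩
      change TensorProduct.map _ _ ((op r • m) ⊗ₜ[ℤ] n - m ⊗ₜ[ℤ] (r • n)) = _
      rw [map_sub, TensorProduct.map_tmul, TensorProduct.map_tmul]
      simp only [LinearMap.id_apply, AddMonoidHom.coe_toIntLinearMap, LinearMap.toAddMonoidHom_coe]
      rw [map_smul])

/-- Functoriality of `- ⊗_S N` in the right-module variable. -/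
noncomputable def lTensorMap {M B : Type u} [AddCommGroup M] [Module Sᵐᵒᵖ M] [AddCommGroup B]
    [Module Sᵐᵒᵖ B] (h : M →ₗ[Sᵐᵒᵖ] B) (N : Type u) [AddCommGroup N] [Module S N] :
    RTensor S M N →ₗ[ℤ] RTensor S B N :=
  Submodule.mapQ _ _ (TensorProduct.map h.toAddMonoidHom.toIntLinearMap LinearMap.id)
    (by
      rw [tensorRel, Submodule.span_le]
      rintro x ⟨m, r, n, rfl⟩
      refine Submodule.subset_span ⟨h m, r, n, ?_⟩
      change TensorProduct.map _ _ ((op r • m) ⊗ₜ[ℤ] n - m ⊗ₜ[ℤ] (r • n)) = _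
      rw [map_sub, TensorProduct.map_tmul, TensorProduct.map_tmul]
      simp only [LinearMap.id_apply, AddMonoidHom.coe_toIntLinearMap, LinearMap.toAddMonoidHom_coe]
      rw [map_smul])

end Tensor

/-! Basic relative homological notions -/

section Defs

variable (S : Type u) [Ring S]

/-- `M` is `N`-subinjective: every map `N → M` extends along every embedding of `N`. -/
def Subinjective (N M : Type u) [AddCommGroup N] [Module S N] [AddCommGroup M]
    [Module S M] : Prop :=
  ∀ (K : Type u) [AddCommGroup K] [Module S K] (i : N →ₗ[S] K), Function.Injective i →
    ∀ f : N →ₗ[S] M, ∃ h : K →ₗ[S] M, h ∘ₗ i = f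

/-- `M` is an injective module. -/
def InjMod (M : Type u) [AddCommGroup M] [Module S M] : Prop :=
  ∀ (N : Type u) [AddCommGroup N] [Module S N], Subinjective S N M

/-- `M` is `N`-subprojective. -/
def Subprojective (M N : Type u) [AddCommGroup M] [Module S M] [AddCommGroup N]
    [Module S N] : Prop :=
  ∀ (B : Type u) [AddCommGroup B] [Module S B] (g : B →ₗ[S] N), Function.Surjective g →
    ∀ f : M →ₗ[S] N, ∃ h : M →ₗ[S] B, g ∘ₗ h = f

/-- A monomorphism of left `S`-modules is pure if it stays injective after
tensoring with any right `S`-module. -/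
def IsPureMono {A B : Type u} [AddCommGroup A] [Module S A] [AddCommGroup B] [Module S B]
    (i : A →ₗ[S] B) : Prop :=
  Function.Injective i ∧
    ∀ (M : Type u) [AddCommGroup M] [Module Sᵐᵒᵖ M], Function.Injective (rTensorMap S M i)

/-- `N` is absolutely pure (fp-injective): every embedding of `N` is pure. -/
def AbsPure (N : Type u) [AddCommGroup N] [Module S N] : Prop :=
  ∀ (K : Type u) [AddCommGroup K] [Module S K] (i : N →ₗ[S] K), Function.Injective i →
    IsPureMono S i

/-- `N` is absolutely `M`-pure, for a right module `M`. -/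
def AbsMPure (M : Type u) [AddCommGroup M] [Module Sᵐᵒᵖ M] (N : Type u) [AddCommGroup N]
    [Module S N] : Prop :=
  ∀ (B : Type u) [AddCommGroup B] [Module S B] (i : N →ₗ[S] B), Function.Injective i →
    Function.Injective (rTensorMap S M i)

/-- `M` is pure-injective: maps into `M` extend along pure monomorphisms. -/
def PureInjective (M : Type u) [AddCommGroup M] [Module S M] : Prop :=
  ∀ (A B : Type u) [AddCommGroup A] [Module S A] [AddCommGroup B] [Module S B]
    (i : A →ₗ[S] B), IsPureMono S i → ∀ f : A →ₗ[S] M, ∃ h : B →ₗ[S] M, h ∘ₗ i = f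

/-- `M` is indigent: its subinjectivity domain is exactly the injective modules. -/
def Indigent (M : Type u) [AddCommGroup M] [Module S M] : Prop :=
  ∀ (N : Type u) [AddCommGroup N] [Module S N], Subinjective S N M ↔ InjMod S N

/-- `M` is pi-indigent: `M` is pure-injective and its subinjectivity domain is exactly
the absolutely pure modules. -/
def PiIndigent (M : Type u) [AddCommGroup M] [Module S M] : Prop :=
  PureInjective S M ∧
    ∀ (N : Type u) [AddCommGroup N] [Module S N], Subinjective S N M ↔ AbsPure S N

/-- Flatness via the equational criterion. -/
def FlatMod (M : Type u) [AddCommGroup M] [Module S M] : Prop :=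
  ∀ (n : ℕ) (r : Fin n → S) (x : Fin n → M), (∑ i, r i • x i) = 0 →
    ∃ (m : ℕ) (a : Fin n → Fin m → S) (y : Fin m → M),
      (∀ i, x i = ∑ j, a i j • y j) ∧ ∀ j, (∑ i, r i * a i j) = 0

/-- Finitely presented module. -/
def FPMod (M : Type u) [AddCommGroup M] [Module S M] : Prop :=
  ∃ (n : ℕ) (K : Submodule S (Fin n → S)), K.FG ∧
    Nonempty ((((Fin n → S)) ⧸ K) ≃ₗ[S] M)

/-- `Ext¹_S(M, N) = 0`, expressed by the splitting of every extension of `N` by `M`. -/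
def ExtVanish (M N : Type u) [AddCommGroup M] [Module S M] [AddCommGroup N] [Module S N] :
    Prop :=
  ∀ (B : Type u) [AddCommGroup B] [Module S B] (i : N →ₗ[S] B) (p : B →ₗ[S] M),
    Function.Injective i → Function.Surjective p → LinearMap.range i = LinearMap.ker p →
      ∃ s : M →ₗ[S] B, p ∘ₗ s = LinearMap.id

/-- `Tor₁^S(N, T) = 0` for a right module `N` and a left module `T`. -/
def TorVanish (N : Type u) [AddCommGroup N] [Module Sᵐᵒᵖ N] (T : Type u) [AddCommGroup T]
    [Module S T] : Prop :=
  ∀ (P K : Type u) [AddCommGroup P] [Module Sᵐᵒᵖ P] [AddCommGroup K] [Module Sᵐᵒᵖ K]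
    (i : K →ₗ[Sᵐᵒᵖ] P) (p : P →ₗ[Sᵐᵒᵖ] N), Module.Projective Sᵐᵒᵖ P →
      Function.Injective i → Function.Surjective p →
        LinearMap.range i = LinearMap.ker p → Function.Injective (lTensorMap S i T)

/-- `M` is a Whitehead test module for injectivity (i-test). -/
def ITest (M : Type u) [AddCommGroup M] [Module S M] : Prop :=
  ∀ (N : Type u) [AddCommGroup N] [Module S N], ExtVanish S M N → InjMod S N

/-- `S` is (left) n-saturated: `S` is not semisimple and every finitely generated
non-projective module is i-test. -/
def NSaturated : Prop :=
  ¬ IsSemisimpleRing S ∧ ∀ (M : Type u) [AddCommGroup M] [Module S M],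
    Module.Finite S M → ¬ Module.Projective S M → ITest S M

/-- A submodule is essential if it intersects every nonzero submodule nontrivially. -/
def EssentialIn {M : Type u} [AddCommGroup M] [Module S M] (A : Submodule S M) : Prop :=
  ∀ B : Submodule S M, B ≠ ⊥ → A ⊓ B ≠ ⊥

/-- `M` is a singular module: every element is annihilated by an essential left ideal. -/
def SingularMod (M : Type u) [AddCommGroup M] [Module S M] : Prop :=
  ∀ x : M, EssentialIn S (LinearMap.ker (LinearMap.toSpanSingleton S M x))

/-- `S` is (left) nonsingular: `Z(S) = 0`. -/
def NonsingularRing : Prop :=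
  ∀ r : S, EssentialIn S (LinearMap.ker (LinearMap.toSpanSingleton S S r)) → r = 0

/-- The socle of a module: the supremum of its simple submodules. -/
def socle (M : Type u) [AddCommGroup M] [Module S M] : Submodule S M :=
  sSup {N : Submodule S M | IsAtom N}

/-- von Neumann regular ring. -/
def IsVNR : Prop := ∀ a : S, ∃ r : S, a * r * a = a

/-- (left) V-ring: every simple module is injective. -/
def VRing : Prop :=
  ∀ (M : Type u) [AddCommGroup M] [Module S M], IsSimpleModule S M → InjMod S M

/-- (left) hereditary: every left ideal is projective. -/
def HereditaryRing : Prop := ∀ I : Submodule S S, Module.Projective S I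

/-- (left) semihereditary: every finitely generated left ideal is projective. -/
def SemihereditaryRing : Prop := ∀ I : Submodule S S, I.FG → Module.Projective S I

/-- (left) SI-ring: every singular module is injective. -/
def SIRing : Prop :=
  ∀ (M : Type u) [AddCommGroup M] [Module S M], SingularMod S M → InjMod S M

/-- quasi-Frobenius ring: two-sided Noetherian and self-injective. -/
def QFRing : Prop :=
  IsNoetherianRing S ∧ IsNoetherianRing Sᵐᵒᵖ ∧ InjMod S S ∧ InjMod Sᵐᵒᵖ S

/-- A module is uniserial if its submodules are totally ordered. -/
def Uniserial (M : Type u) [AddCommGroup M] [Module S M] : Prop :=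
  ∀ A B : Submodule S M, A ≤ B ∨ B ≤ A

/-- (left) serial ring: `S` is a finite direct sum of uniserial left ideals. -/
def SerialRing : Prop :=
  ∃ (n : ℕ) (f : Fin n → Submodule S S), (∀ i, Uniserial S (f i)) ∧
    iSupIndep f ∧ iSup f = ⊤

/-- (left) coherent: every finitely generated left ideal is finitely presented. -/
def CoherentRing : Prop := ∀ I : Submodule S S, I.FG → FPMod S I

/-- Indecomposable ring: no nontrivial central idempotents. -/
def IndecompRing : Prop :=
  Nontrivial S ∧ ∀ e : S, e * e = e → (∀ r : S, e * r = r * e) → e = 0 ∨ e = 1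

end Defs

/-! A module admitting no nonzero map to `U` is trivially `U`-subinjective, hence injective
since `U` is indigent. By the vanishing hypothesis, quotients and direct sums of injective
modules admit no nonzero map to `U`: such a map pulls back to the injective module, resp.
restricts to each summand. So quotients of injectives are injective, which makes every right
ideal projective, and countable direct sums of injectives are injective, which forces ascending
chains of right ideals to stabilise. -/

section InjectiveModules

variable {S : Type u} [Ring S]

theorem injMod_of_injective (E : Type u) [AddCommGroup E] [Module S E]
    [h : Module.Injective S E] : InjMod S E := fun _ _ _ _ _ _ i hi f =>
  let ⟨g, hg⟩ := h.out i hi f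
  ⟨g, LinearMap.ext hg⟩

variable (S) in
theorem exists_injMod_embedding (M : Type u) [AddCommGroup M] [Module S M] :
    ∃ (E : Type u) (_ : AddCommGroup E) (_ : Module S E) (e : M →ₗ[S] E),
      Function.Injective e ∧ InjMod S E := by
  let ι := CategoryTheory.Injective.ι (ModuleCat.of S M)
  let E := CategoryTheory.Injective.under (ModuleCat.of S M)
  have : CategoryTheory.Injective (ModuleCat.of S E) :=
    inferInstanceAs (CategoryTheory.Injective E)
  have : Module.Injective S E := Module.injective_module_of_injective_object S E
  exact ⟨E, inferInstance, inferInstance, ι.hom,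
    (ModuleCat.mono_iff_injective ι).mp inferInstance, injMod_of_injective E⟩

theorem Indigent.injMod_of_forall_eq_zero {U N : Type u} [AddCommGroup U] [Module S U]
    [AddCommGroup N] [Module S N] (hind : Indigent S U) (h0 : ∀ f : N →ₗ[S] U, f = 0) :
    InjMod S N :=
  (hind N).mp fun _ _ _ _ _ f => ⟨0, by rw [h0 f, LinearMap.zero_comp]⟩

end InjectiveModules

section Hereditary

variable {S : Type u} [Ring S]

/-- With `K = e (ker f)`, the surjection `f` identifies `N` with the submodule `e M / K` of
`E / K`; a map `I → N` extended over `S` is `x ↦ x • [y]`, and `x ↦ x • y` lifts it back into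
`e M`. -/
theorem exists_comp_eq_of_injMod_quotient {M N E : Type u} [AddCommGroup M] [Module S M]
    [AddCommGroup N] [Module S N] [AddCommGroup E] [Module S E] {f : M →ₗ[S] N}
    (hf : Function.Surjective f) {e : M →ₗ[S] E} (he : Function.Injective e)
    (hQ : InjMod S (E ⧸ (ker f).map e)) (I : Submodule S S) (g : I →ₗ[S] N) :
    ∃ h : I →ₗ[S] M, f ∘ₗ h = g := by
  set K := (ker f).map e
  let j := (ker f).mapQ K e ((ker f).le_comap_map e)
  have hj : Function.Injective j := by
    rw [← LinearMap.ker_eq_bot, Submodule.ker_mapQ, Submodule.comap_map_eq_of_injective he,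
      Submodule.mkQ_map_self]
  let ι : N →ₗ[S] E ⧸ K := j ∘ₗ (f.quotKerEquivOfSurjective hf).symm.toLinearMap
  have hι : ∀ m, ι (f m) = K.mkQ (e m) := fun m => by
    change j ((f.quotKerEquivOfSurjective hf).symm (f m)) = _
    rw [← f.quotKerEquivOfSurjective_apply_mk hf m, LinearEquiv.symm_apply_apply]
    rfl
  have hι_inj : Function.Injective ι := hj.comp (f.quotKerEquivOfSurjective hf).symm.injective
  obtain ⟨G, hG⟩ := hQ I S I.subtype I.injective_subtype (ι ∘ₗ g)
  obtain ⟨y, hy⟩ := K.mkQ_surjective (G 1)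
  have hGy : ∀ x : I, K.mkQ ((x : S) • y) = ι (g x) := fun x => by
    rw [map_smul, hy, ← map_smul, smul_eq_mul, mul_one]
    exact LinearMap.congr_fun hG x
  have hrange : ∀ x : I, (x : S) • y ∈ range e := fun x => by
    obtain ⟨m, hm⟩ := hf (g x)
    have hK : (x : S) • y - e m ∈ K := by
      rw [← Submodule.Quotient.eq, ← Submodule.mkQ_apply, ← Submodule.mkQ_apply, hGy, ← hm, hι]
    simpa using add_mem (LinearMap.map_le_range hK) (mem_range_self e m)
  let h : I →ₗ[S] M := (LinearEquiv.ofInjective e he).symm ∘ₗ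
    (toSpanSingleton S E y ∘ₗ I.subtype).codRestrict (range e) hrange
  have heh : ∀ x, e (h x) = (x : S) • y := fun x =>
    congrArg Subtype.val ((LinearEquiv.ofInjective e he).apply_symm_apply _)
  exact ⟨h, LinearMap.ext fun x => hι_inj (show ι (f (h x)) = ι (g x) by rw [hι, heh, hGy])⟩

theorem projective_of_forall_quotient_injMod
    (hquot : ∀ (E N : Type u) [AddCommGroup E] [Module S E] [AddCommGroup N] [Module S N],
      InjMod S E → ∀ p : E →ₗ[S] N, Function.Surjective p → InjMod S N)
    (I : Submodule S S) : Module.Projective S I := by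
  refine Module.Projective.of_lifting_property fun {M N} _ _ _ _ f g hf => ?_
  obtain ⟨E, _, _, e, he, hE⟩ := exists_injMod_embedding S M
  exact exists_comp_eq_of_injMod_quotient hf he (hquot _ _ hE _ (Submodule.mkQ_surjective _)) I g

end Hereditary

open scoped DirectSum

section Noetherian

variable {S : Type u} [Ring S]

theorem DirectSum.exists_linearMap_apply_eq {ι : Type*} {M : Type*} {E : ι → Type*}
    [AddCommGroup M] [Module S M] [∀ i, AddCommGroup (E i)] [∀ i, Module S (E i)]
    (ψ : ∀ i, M →ₗ[S] E i) (hψ : ∀ x, {i | ψ i x ≠ 0}.Finite) :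
    ∃ φ : M →ₗ[S] ⨁ i, E i, ∀ x i, φ x i = ψ i x :=
  ⟨{ toFun x := DFinsupp.mk' (fun i => ψ i x)
        (Trunc.mk ⟨(hψ x).toFinset.val, fun _ => or_iff_not_imp_right.mpr (hψ x).mem_toFinset.mpr⟩)
     map_add' x y := DFinsupp.ext fun i => map_add (ψ i) x y
     map_smul' r x := DFinsupp.ext fun i => map_smul (ψ i) r x }, fun _ _ => rfl⟩

/-- For a chain `c` with union `I`, the maps `I → S ⧸ c n ↪ E n` vanish eventually at each point,
so they assemble into `I → ⨁ n, E n`; when `⨁ n, E n` is injective this map is `x ↦ x • z` for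
some `z`, and the finite support of `z` bounds the chain. -/
theorem isNoetherianRing_of_forall_directSum_injMod
    (hsum : ∀ (E : ℕ → Type u) [∀ n, AddCommGroup (E n)] [∀ n, Module S (E n)],
      (∀ n, InjMod S (E n)) → InjMod S (⨁ n, E n)) :
    IsNoetherianRing S := by
  rw [isNoetherianRing_iff, ← monotone_stabilizes_iff_noetherian]
  intro c
  choose E _ _ e he hE using fun n => exists_injMod_embedding S (S ⧸ c n)
  set I := ⨆ n, c n
  let ψ n : I →ₗ[S] E n := e n ∘ₗ (c n).mkQ ∘ₗ I.subtype
  have hψ : ∀ x : I, ∀ n, ψ n x = 0 ↔ (x : S) ∈ c n := fun x n => by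
    rw [← Submodule.Quotient.mk_eq_zero, ← (e n).map_eq_zero_iff (he n)]
    rfl
  have hψ_fin : ∀ x : I, {n | ψ n x ≠ 0}.Finite := fun x => by
    obtain ⟨k, hk⟩ := (Submodule.mem_iSup_of_chain c _).mp x.2
    refine (Set.finite_lt_nat k).subset fun n hn => ?_
    by_contra hkn
    exact hn ((hψ x n).mpr (c.monotone (not_lt.mp hkn) hk))
  obtain ⟨φ, hφ⟩ := DirectSum.exists_linearMap_apply_eq ψ hψ_fin
  obtain ⟨h, hh⟩ := hsum E hE I S I.subtype I.injective_subtype φ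
  obtain ⟨N, hN⟩ := (DFinsupp.finite_support (h 1)).bddAbove
  refine ⟨N + 1, fun n hn => le_antisymm (c.monotone hn) ?_⟩
  refine (le_iSup c n).trans fun x hx => ?_
  have hx1 : h x = x • h 1 := by rw [← map_smul, smul_eq_mul, mul_one]
  have hz : h 1 (N + 1) = 0 := not_not.mp fun hne => by simpa using hN hne
  rw [← hψ ⟨x, hx⟩, ← hφ, ← LinearMap.congr_fun hh, LinearMap.comp_apply, Submodule.subtype_apply,
    hx1, DirectSum.smul_apply, hz, smul_zero]

theorem stmt_17_general {R : Type u} [Ring R] (U : Type u) [AddCommGroup U]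
    [Module Rᵐᵒᵖ U] (hind : Indigent Rᵐᵒᵖ U)
    (hhom : ∀ (E : Type u) [AddCommGroup E] [Module Rᵐᵒᵖ E], InjMod Rᵐᵒᵖ E →
      ∀ f : E →ₗ[Rᵐᵒᵖ] U, f = 0) :
    HereditaryRing Rᵐᵒᵖ ∧ IsNoetherianRing Rᵐᵒᵖ := by
  have hquot : ∀ (E N : Type u) [AddCommGroup E] [Module Rᵐᵒᵖ E] [AddCommGroup N]
      [Module Rᵐᵒᵖ N], InjMod Rᵐᵒᵖ E → ∀ p : E →ₗ[Rᵐᵒᵖ] N, Function.Surjective p →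
        InjMod Rᵐᵒᵖ N := fun E _ _ _ _ _ hE p hp =>
    hind.injMod_of_forall_eq_zero fun f =>
      (LinearMap.cancel_right hp).mp (by rw [hhom E hE (f ∘ₗ p), LinearMap.zero_comp])
  have hsum : ∀ (E : ℕ → Type u) [∀ n, AddCommGroup (E n)] [∀ n, Module Rᵐᵒᵖ (E n)],
      (∀ n, InjMod Rᵐᵒᵖ (E n)) → InjMod Rᵐᵒᵖ (⨁ n, E n) := fun E _ _ hE =>
    hind.injMod_of_forall_eq_zero fun f => DirectSum.linearMap_ext _ fun n => by
      rw [hhom (E n) (hE n) (f ∘ₗ DirectSum.lof _ _ _ n), LinearMap.zero_comp]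
  exact ⟨projective_of_forall_quotient_injMod hquot,
    isNoetherianRing_of_forall_directSum_injMod hsum⟩

theorem stmt_17 {R : Type u} [Ring R] (U : Type u) [AddCommGroup U]
    [Module Rᵐᵒᵖ U] (hsimple : IsSimpleModule Rᵐᵒᵖ U)
    (hninj : ¬ InjMod Rᵐᵒᵖ U) (hind : Indigent Rᵐᵒᵖ U)
    (hhom : ∀ (E : Type u) [AddCommGroup E] [Module Rᵐᵒᵖ E], InjMod Rᵐᵒᵖ E →
      ∀ f : E →ₗ[Rᵐᵒᵖ] U, f = 0) :
    HereditaryRing Rᵐᵒᵖ ∧ IsNoetherianRing Rᵐᵒᵖ :=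
  stmt_17_general U hind hhom
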